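/- arXiv:2511.02821 — 5 statements merged into one kernel-verified Lean document; each statement's English description precedes it below -/
import Mathlib

section
/- Fix vectors x_{t-1}, y_{t-1} in E, a scalar λ_t ≥ 1, and β > 0. Define φ_t(x) = ⟨x − y_{t-1}, g⟩ + (β/2)‖x − y_{t-1}‖² where g = ∇f(y_{t-1}), and define Φ_t(w) = λ_t⁻¹⟨w − y_{t-1}, g⟩ + (λ_t⁻²β/2)‖w + λ_t((1 − λ_t⁻¹)x_{t-1} − y_{t-1})‖². If w_t ∈ K satisfies max_{w∈K} ⟨w_t − w, ∇Φ_t(w_t)⟩ ≤ ν_t, then the point x_t = (1 − λ_t⁻¹)x_{t-1} + λ_t⁻¹w_t satisfies max_{w∈K} ⟨x_t − ((1−λ_t⁻¹)x_{t-1} + λ_t⁻¹w), ∇φ_t(x_t)⟩ ≤ ν_t. -/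
open scoped RealInnerProductSpace

/-- sliding equivalence, Lemma 4: if w_t has Frank-Wolfe gap at most ν_t
for Φ_t, then x_t = (1 − λ⁻¹)x_{t-1} + λ⁻¹ w_t has restricted gap ω_t(x_t) ≤ ν_t for φ_t. -/
theorem sliding_gap_equivalence
    {E : Type*} [NormedAddCommGroup E] [InnerProductSpace ℝ E]
    (K : Set E) (hK : Convex ℝ K) (hKc : IsCompact K)
    (xprev yprev g : E) (lam β ν : ℝ) (hlam : 1 ≤ lam) (hβ : 0 < β) (hν : 0 ≤ ν)
    (wt : E) (hwt : wt ∈ K)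
    -- ⟨w_t − w, ∇Φ_t(w_t)⟩ ≤ ν for all w ∈ K, with
    -- ∇Φ_t(w) = λ⁻¹ g + λ⁻² β (w + λ((1 − λ⁻¹)x_{t−1} − y_{t−1}))
    (hgap : ∀ w ∈ K,
      ⟪wt - w, lam⁻¹ • g + (lam⁻¹ ^ 2 * β) •
        (wt + lam • ((1 - lam⁻¹) • xprev - yprev))⟫ ≤ ν) :
    ∀ w ∈ K,
      ⟪((1 - lam⁻¹) • xprev + lam⁻¹ • wt) - ((1 - lam⁻¹) • xprev + lam⁻¹ • w),
        g + β • (((1 - lam⁻¹) • xprev + lam⁻¹ • wt) - yprev)⟫ ≤ ν := by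
  intro w hw
  have hl : lam ≠ 0 := by linarith
  have key : ((1 - lam⁻¹) • xprev + lam⁻¹ • wt) - ((1 - lam⁻¹) • xprev + lam⁻¹ • w)
      = lam⁻¹ • (wt - w) := by module
  have hv : lam⁻¹ • (g + β • (((1 - lam⁻¹) • xprev + lam⁻¹ • wt) - yprev))
      = lam⁻¹ • g + (lam⁻¹ ^ 2 * β) • (wt + lam • ((1 - lam⁻¹) • xprev - yprev)) := by
    match_scalars <;> field_simp <;> ring_nf <;> tauto
  calc ⟪((1 - lam⁻¹) • xprev + lam⁻¹ • wt) - ((1 - lam⁻¹) • xprev + lam⁻¹ • w),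
        g + β • (((1 - lam⁻¹) • xprev + lam⁻¹ • wt) - yprev)⟫
      = ⟪wt - w, lam⁻¹ • (g + β • (((1 - lam⁻¹) • xprev + lam⁻¹ • wt) - yprev))⟫ := by
        rw [key, real_inner_smul_left, ← real_inner_smul_right]
    _ = _ := by rw [hv]
    _ ≤ ν := hgap w hw
end

section
/- Let f : E → ℝ be β-smooth and convex on a convex compact set K ⊆ E, fix y ∈ K, and let x* = argmin_{x∈K} {⟨x − y, ∇f(y)⟩ + (β/2)‖x − y‖²}. Then for any w ∈ K and any λ ≥ 1, setting x̄ = (1 − λ⁻¹)x̂ + λ⁻¹w for an arbitrary x̂ ∈ K, we have f(x*) + (β/2)‖x* − x̄‖² ≤ (1 − λ⁻¹)f(x̂) + λ⁻¹f(w) + (β/2)‖x̄ − y‖². -/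
open scoped RealInnerProductSpace

/-- error-free descent lemma for FISTA: with
φ(x) = ⟨x − y, ∇f(y)⟩ + (β/2)‖x − y‖² minimized over K at x*, for any w, x̂ ∈ K and
λ ≥ 1, setting x̄ = (1 − λ⁻¹)x̂ + λ⁻¹w we have
f(x*) + (β/2)‖x* − x̄‖² ≤ (1 − λ⁻¹)f(x̂) + λ⁻¹f(w) + (β/2)‖x̄ − y‖². -/
theorem fista_descent_exact
    {E : Type*} [NormedAddCommGroup E] [InnerProductSpace ℝ E]
    (K : Set E) (hK : Convex ℝ K) (hKc : IsCompact K)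
    (f : E → ℝ) (Gf : E → E) (β : ℝ) (hβ : 0 < β)
    (hsmooth : ∀ u v : E, f u ≤ f v + ⟪Gf v, u - v⟫ + β / 2 * ‖u - v‖ ^ 2)
    (hconv : ∀ u v : E, f v + ⟪Gf v, u - v⟫ ≤ f u)
    (y : E) (hy : y ∈ K)
    (xs : E) (hxs : xs ∈ K)
    (hmin : ∀ x ∈ K, ⟪xs - y, Gf y⟫ + β / 2 * ‖xs - y‖ ^ 2 ≤
        ⟪x - y, Gf y⟫ + β / 2 * ‖x - y‖ ^ 2)
    (hopt : ∀ z ∈ K, 0 ≤ ⟪Gf y + β • (xs - y), z - xs⟫) :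
    ∀ w ∈ K, ∀ xhat ∈ K, ∀ lam : ℝ, 1 ≤ lam →
      f xs + β / 2 * ‖xs - ((1 - lam⁻¹) • xhat + lam⁻¹ • w)‖ ^ 2 ≤
        (1 - lam⁻¹) * f xhat + lam⁻¹ * f w +
          β / 2 * ‖((1 - lam⁻¹) • xhat + lam⁻¹ • w) - y‖ ^ 2 := by
  intro w hw xhat hxhat lam hlam
  have ht0 : 0 ≤ lam⁻¹ := inv_nonneg.2 (by linarith)
  have ht1 : lam⁻¹ ≤ 1 := inv_le_one_of_one_le₀ hlam
  set t := lam⁻¹ with ht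
  set xb := (1 - t) • xhat + t • w with hxb
  have hxbK : xb ∈ K := hK hxhat hw (by linarith) ht0 (by ring)
  -- quadratic identity for φ
  have e1 : xb - xs = (xb - y) - (xs - y) := by abel
  have e2 : ‖xb - xs‖ ^ 2 = ‖xb - y‖ ^ 2 - 2 * ⟪xb - y, xs - y⟫ + ‖xs - y‖ ^ 2 := by
    rw [e1]; exact norm_sub_sq_real (xb - y) (xs - y)
  have h3 : ⟪Gf y + β • (xs - y), xb - xs⟫
      = ⟪Gf y, xb - xs⟫ + β * ⟪xs - y, xb - xs⟫ := by
    rw [inner_add_left, real_inner_smul_left]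
  have h4 : ⟪xs - y, xb - xs⟫ = ⟪xs - y, xb - y⟫ - ‖xs - y‖ ^ 2 := by
    rw [e1, inner_sub_right, real_inner_self_eq_norm_sq]
  have h5 : ⟪Gf y, xb - xs⟫ = ⟪Gf y, xb - y⟫ - ⟪Gf y, xs - y⟫ := by
    rw [e1, inner_sub_right]
  have hcomm : ⟪xb - y, xs - y⟫ = ⟪xs - y, xb - y⟫ := real_inner_comm _ _
  have hq : ⟪Gf y, xb - y⟫ + β / 2 * ‖xb - y‖ ^ 2
      = ⟪Gf y, xs - y⟫ + β / 2 * ‖xs - y‖ ^ 2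
        + ⟪Gf y + β • (xs - y), xb - xs⟫ + β / 2 * ‖xb - xs‖ ^ 2 := by
    rw [h3, h4, h5, e2, hcomm]; ring
  -- optimality at xs
  have hC : 0 ≤ ⟪Gf y + β • (xs - y), xb - xs⟫ := hopt xb hxbK
  -- smoothness at y
  have hA : f xs ≤ f y + ⟪Gf y, xs - y⟫ + β / 2 * ‖xs - y‖ ^ 2 := hsmooth xs y
  -- convexity split
  have hsplit : ⟪Gf y, xb - y⟫ = (1 - t) * ⟪Gf y, xhat - y⟫ + t * ⟪Gf y, w - y⟫ := by
    have : xb - y = (1 - t) • (xhat - y) + t • (w - y) := by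
      rw [hxb]; module
    rw [this, inner_add_right, real_inner_smul_right, real_inner_smul_right]
  have hD : f y + ⟪Gf y, xb - y⟫ ≤ (1 - t) * f xhat + t * f w := by
    have h1 := hconv xhat y
    have h2 := hconv w y
    have h1' := mul_le_mul_of_nonneg_left h1 (by linarith : (0:ℝ) ≤ 1 - t)
    have h2' := mul_le_mul_of_nonneg_left h2 ht0
    rw [hsplit]; nlinarith [h1', h2']
  -- conclude
  have hnorm : ‖xs - xb‖ = ‖xb - xs‖ := norm_sub_rev _ _
  calc f xs + β / 2 * ‖xs - xb‖ ^ 2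
      ≤ f y + ⟪Gf y, xb - y⟫ + β / 2 * ‖xb - y‖ ^ 2 := by
        rw [hnorm]; linarith [hA, hq, hC]
    _ ≤ (1 - t) * f xhat + t * f w + β / 2 * ‖xb - y‖ ^ 2 := by linarith [hD]
end

section
/- Under the same setup, if instead x̃ ∈ K satisfies the approximate optimality condition ⟨x̃ − x̄, ∇φ(x̃)⟩ ≤ ν where φ(x) = ⟨x − y, ∇f(y)⟩ + (β/2)‖x − y‖² and x̄ = (1 − λ⁻¹)x̂ + λ⁻¹w, then f(x̃) + (β/2)‖x̃ − x̄‖² ≤ (1 − λ⁻¹)f(x̂) + λ⁻¹f(w) + (β/2)‖x̄ − y‖² + ν. -/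
open scoped RealInnerProductSpace

/-- approximate descent lemma for FISTA: if x̃ ∈ K satisfies
⟨x̃ − x̄, ∇φ(x̃)⟩ ≤ ν where φ(x) = ⟨x − y, ∇f(y)⟩ + (β/2)‖x − y‖² and
x̄ = (1−λ⁻¹)x̂ + λ⁻¹w, then
f(x̃) + (β/2)‖x̃ − x̄‖² ≤ (1−λ⁻¹)f(x̂) + λ⁻¹f(w) + (β/2)‖x̄ − y‖² + ν. -/
theorem fista_descent_approx
    {E : Type*} [NormedAddCommGroup E] [InnerProductSpace ℝ E]
    (K : Set E) (hK : Convex ℝ K) (hKc : IsCompact K)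
    (f : E → ℝ) (Gf : E → E) (β : ℝ) (hβ : 0 < β)
    (hsmooth : ∀ u v : E, f u ≤ f v + ⟪Gf v, u - v⟫ + β / 2 * ‖u - v‖ ^ 2)
    (hconv : ∀ u v : E, f v + ⟪Gf v, u - v⟫ ≤ f u)
    (y : E) (hy : y ∈ K)
    (xhat : E) (hxhat : xhat ∈ K) (w : E) (hw : w ∈ K)
    (lam ν : ℝ) (hlam : 1 ≤ lam) (hν : 0 ≤ ν)
    (xt : E) (hxt : xt ∈ K)
    (happrox : ⟪xt - ((1 - lam⁻¹) • xhat + lam⁻¹ • w), Gf y + β • (xt - y)⟫ ≤ ν) :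
    f xt + β / 2 * ‖xt - ((1 - lam⁻¹) • xhat + lam⁻¹ • w)‖ ^ 2 ≤
      (1 - lam⁻¹) * f xhat + lam⁻¹ * f w +
        β / 2 * ‖((1 - lam⁻¹) • xhat + lam⁻¹ • w) - y‖ ^ 2 + ν := by
  set g := Gf y with hg
  set z := (1 - lam⁻¹) • xhat + lam⁻¹ • w with hzdef
  have ha : (0:ℝ) ≤ 1 - lam⁻¹ := by
    have : lam⁻¹ ≤ 1 := by
      rw [inv_le_one_iff₀]; right; exact hlam
    linarith
  have hb : (0:ℝ) ≤ lam⁻¹ := inv_nonneg.mpr (by linarith)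
  have hz : z - y = (1 - lam⁻¹) • (xhat - y) + lam⁻¹ • (w - y) := by
    rw [hzdef]; module
  have hx : xt - z = (xt - y) - (z - y) := by abel
  have key : ⟪g, xt - y⟫ + β / 2 * ‖xt - y‖ ^ 2 + β / 2 * ‖xt - z‖ ^ 2
      = ⟪g, z - y⟫ + β / 2 * ‖z - y‖ ^ 2 + ⟪xt - z, g + β • (xt - y)⟫ := by
    set u := xt - y with hu
    set v := z - y with hv
    have hx' : xt - z = u - v := by rw [hu, hv]; abel
    rw [hx', ← real_inner_self_eq_norm_sq, ← real_inner_self_eq_norm_sq,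
      ← real_inner_self_eq_norm_sq]
    simp only [inner_sub_left, inner_sub_right, inner_add_right, real_inner_smul_right]
    linear_combination real_inner_comm g v - real_inner_comm g u - (β / 2) * real_inner_comm v u
  have split : ⟪g, z - y⟫ = (1 - lam⁻¹) * ⟪g, xhat - y⟫ + lam⁻¹ * ⟪g, w - y⟫ := by
    rw [hz]; simp only [inner_add_right, real_inner_smul_right]
  have c1 : (1 - lam⁻¹) * f y + (1 - lam⁻¹) * ⟪g, xhat - y⟫ ≤ (1 - lam⁻¹) * f xhat := by
    nlinarith [hconv xhat y]
  have c2 : lam⁻¹ * f y + lam⁻¹ * ⟪g, w - y⟫ ≤ lam⁻¹ * f w := by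
    nlinarith [hconv w y]
  have hsum : (1 - lam⁻¹) * f y + lam⁻¹ * f y = f y := by ring
  have h1 := hsmooth xt y
  rw [← hg] at h1
  linarith [h1, happrox, key, c1, c2, split, hsum]
end

section
/- Let K be a polytope with vertex set V, and let φ be a differentiable convex function on K. Suppose there is a vector g and a subset F of vertices such that ⟨v − u, ∇φ(x*)⟩ > 0 for all v ∈ V \ F and some fixed u ∈ conv(F), where x* minimizes φ over K. Then x* ∈ conv(F); i.e., in any representation of x* as a convex combination of vertices, no vertex outside F can have positive weight. -/
open scoped RealInnerProductSpace

/-- if the minimizer x* of a convex differentiable φ over the polytope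
K = conv(V) satisfies the first-order optimality condition, and ⟨v − u, ∇φ(x*)⟩ > 0
for all vertices v ∈ V \ F with some u ∈ conv(F), then x* ∈ conv(F). -/
theorem minimizer_in_face
    {E : Type*} [NormedAddCommGroup E] [InnerProductSpace ℝ E]
    (V : Finset E) (F : Finset E) (hF : F ⊆ V)
    (φ : E → ℝ) (Gφ : E → E)
    (hconv : ∀ x y : E, φ x + ⟪Gφ x, y - x⟫ ≤ φ y)
    (xs : E) (hxs : xs ∈ convexHull ℝ (V : Set E))
    (hmin : ∀ x ∈ convexHull ℝ (V : Set E), φ xs ≤ φ x)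
    (hopt : ∀ z ∈ convexHull ℝ (V : Set E), 0 ≤ ⟪Gφ xs, z - xs⟫)
    (u : E) (hu : u ∈ convexHull ℝ (F : Set E))
    (hsep : ∀ v ∈ V, v ∉ F → 0 < ⟪v - u, Gφ xs⟫) :
    xs ∈ convexHull ℝ (F : Set E) := by
  -- represent xs as a convex combination of V
  classical
  rw [Finset.convexHull_eq] at hxs
  obtain ⟨w, hw0, hw1, hwx⟩ := hxs
  rw [Finset.centerMass_eq_of_sum_1 _ _ hw1] at hwx
  simp only [id_eq] at hwx
  have huV : u ∈ convexHull ℝ (V : Set E) :=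
    convexHull_mono (by exact_mod_cast hF) hu
  -- the perturbed point z
  set p : E → E := fun v => if v ∈ F then v else u with hp
  set z : E := ∑ v ∈ V, w v • p v with hz
  have hzK : z ∈ convexHull ℝ (V : Set E) := by
    apply (convex_convexHull ℝ (V : Set E)).sum_mem hw0 hw1
    intro v hv
    by_cases h : v ∈ F
    · simp [hp, h]; exact subset_convexHull ℝ _ hv
    · simp [hp, h]; exact huV
  have hdiff : z - xs = ∑ v ∈ V, w v • (p v - v) := by
    rw [hz, ← hwx, ← Finset.sum_sub_distrib]
    congr 1; ext v; rw [smul_sub]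
  have hsum : ⟪Gφ xs, z - xs⟫ = ∑ v ∈ V, w v * ⟪Gφ xs, p v - v⟫ := by
    rw [hdiff, inner_sum]
    congr 1; ext v; rw [real_inner_smul_right]
  have hterm_nonpos : ∀ v ∈ V, w v * ⟪Gφ xs, p v - v⟫ ≤ 0 := by
    intro v hv
    by_cases h : v ∈ F
    · simp [hp, h]
    · have h1 : (⟪Gφ xs, p v - v⟫ : ℝ) < 0 := by
        have := hsep v hv h
        rw [real_inner_comm] at this
        simp only [hp, if_neg h]
        have : (⟪Gφ xs, u - v⟫ : ℝ) = -⟪Gφ xs, v - u⟫ := by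
          rw [← inner_neg_right]; congr 1; abel
        linarith [this, (real_inner_comm (v - u) (Gφ xs)).symm ▸ hsep v hv h]
      exact mul_nonpos_of_nonneg_of_nonpos (hw0 v hv) h1.le
  have hge : 0 ≤ ∑ v ∈ V, w v * ⟪Gφ xs, p v - v⟫ := hsum ▸ hopt z hzK
  have hall : ∀ v ∈ V, w v * ⟪Gφ xs, p v - v⟫ = 0 := by
    intro v hv
    by_contra hne
    have hlt : w v * ⟪Gφ xs, p v - v⟫ < 0 := lt_of_le_of_ne (hterm_nonpos v hv) hne
    have : ∑ x ∈ V, w x * ⟪Gφ xs, p x - x⟫ < 0 :=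
      Finset.sum_neg' hterm_nonpos ⟨v, hv, hlt⟩
    linarith
  have hwz : ∀ v ∈ V, v ∉ F → w v = 0 := by
    intro v hv h
    have h1 : (⟪Gφ xs, p v - v⟫ : ℝ) < 0 := by
      have heq : (⟪Gφ xs, p v - v⟫ : ℝ) = -⟪v - u, Gφ xs⟫ := by
        simp only [hp, if_neg h]
        rw [real_inner_comm, ← inner_neg_left]; congr 1; abel
      rw [heq]; linarith [hsep v hv h]
    have := hall v hv
    rcases mul_eq_zero.mp this with h' | h'
    · exact h'
    · exact absurd h' h1.ne
  -- conclude
  rw [Finset.convexHull_eq]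
  refine ⟨w, fun v hv => hw0 v (hF hv), ?_, ?_⟩
  · rw [← hw1]
    exact Finset.sum_subset hF (fun v hv h => hwz v hv h)
  · rw [Finset.centerMass_eq_of_sum_1]
    · rw [← hwx]
      exact Finset.sum_subset hF (fun v hv h => by rw [hwz v hv h, zero_smul])
    · rw [← hw1]
      exact Finset.sum_subset hF (fun v hv h => hwz v hv h)
end

section
/- Let f be β-smooth and convex on convex compact K with diameter D, let x* minimize f over K, denote g = f(w) − f(x*) for w ∈ K, and let q(w) = max_{u∈K}⟨w − u, ∇f(w)⟩ be the Frank-Wolfe dual gap. If g − γ·q(w) + (γ²βD²)/2 ≥ 0 for all γ ∈ [0,1], then q(w) ≤ D√(2βg) whenever g ≤ βD²/2. -/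
/-- primal-to-dual gap conversion, scalar form: if g ≥ 0, β > 0, D > 0,
q ≥ 0 satisfy g − γq + γ²βD²/2 ≥ 0 for all γ ∈ [0,1] and g ≤ βD²/2,
then q ≤ D√(2βg). -/
theorem primal_to_dual_gap (g β D q : ℝ)
    (hg : 0 ≤ g) (hβ : 0 < β) (hD : 0 < D) (hq : 0 ≤ q)
    (hineq : ∀ γ ∈ Set.Icc (0 : ℝ) 1, 0 ≤ g - γ * q + γ ^ 2 * β * D ^ 2 / 2)
    (hgb : g ≤ β * D ^ 2 / 2) :
    q ≤ D * Real.sqrt (2 * β * g) := by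
  have hD2 : (0:ℝ) < β * D ^ 2 := by positivity
  rcases eq_or_lt_of_le hg with h0 | hgpos
  · -- g = 0 : show q = 0
    have hγ : q / (β * D ^ 2) ∈ Set.Icc (0:ℝ) 1 := by
      constructor
      · positivity
      · have h1 := hineq 1 (by norm_num)
        rw [← h0] at h1
        rw [div_le_one hD2]
        nlinarith
    have := hineq _ hγ
    rw [← h0] at this
    have hq0 : q = 0 := by
      rcases eq_or_lt_of_le hq with h | h
      · exact h.symm
      · exfalso
        have hne : (β * D ^ 2) ≠ 0 := ne_of_gt hD2
        have ht2 : (q / (β * D ^ 2)) ^ 2 * β * D ^ 2 = q / (β * D ^ 2) * q := by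
          field_simp
        have htq : 0 < q / (β * D ^ 2) * q := mul_pos (div_pos h hD2) h
        linarith
    rw [hq0]
    positivity
  · set γ := Real.sqrt (2 * g / (β * D ^ 2)) with hγdef
    have harg : 0 ≤ 2 * g / (β * D ^ 2) := by positivity
    have hγ2 : γ ^ 2 = 2 * g / (β * D ^ 2) := Real.sq_sqrt harg
    have hγpos : 0 < γ := Real.sqrt_pos.mpr (by positivity)
    have hγ1 : γ ≤ 1 := by
      rw [hγdef, show (1:ℝ) = Real.sqrt 1 by simp]
      apply Real.sqrt_le_sqrt
      rw [div_le_one hD2]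
      linarith
    have hkey := hineq γ ⟨le_of_lt hγpos, hγ1⟩
    have hmul : γ * q ≤ 2 * g := by
      have : γ ^ 2 * β * D ^ 2 / 2 = g := by
        rw [hγ2]; field_simp
      linarith
    -- show D * √(2βg) * γ = 2g
    have hsq : 2 * β * g * (2 * g / (β * D ^ 2)) = (2 * g / D) ^ 2 := by
      field_simp
    have hRγ : D * Real.sqrt (2 * β * g) * γ = 2 * g := by
      rw [hγdef, mul_assoc, ← Real.sqrt_mul (by positivity), hsq,
        Real.sqrt_sq (by positivity)]
      field_simp
    rw [← hRγ] at hmul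
    calc q = γ * q / γ := by field_simp
    _ ≤ D * Real.sqrt (2 * β * g) * γ / γ := by
        apply div_le_div_of_nonneg_right hmul hγpos.le |>.trans_eq rfl
    _ = D * Real.sqrt (2 * β * g) := by field_simp
end
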